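/- arXiv:1110.2605 — 2 statements merged into one kernel-verified Lean document; each statement's English description precedes it below -/
import Mathlib

section
/- Let e,x∈ℝ² with x₁≤0≤e₁, x₂≤0≤e₂, e−x=ℓ(cos θ, sin θ) for some θ∈(0,π/2), and a_{i1}≠x₁, a_{i2}≠e₂ for all i=1,…,M. Assume it is NOT the case that ω^a_{e,x}<0, ω^b_{e,x}>0 and tan θ = ω^b_{e,x}/(−ω^a_{e,x}). Then there exist angles θ', θ'' with 0<θ'<θ<θ''≤π/2 such that the points x'=x+(−λ₁,0), e'=e+(0,−β₁), x''=x+(λ₂,0), e''=e+(0,β₂) (with λ₁=ℓ(cos θ'−cos θ), β₁=ℓ(sin θ−sin θ'), λ₂=ℓ(cos θ−cos θ''), β₂=ℓ(sin θ''−sin θ)) satisfy the admissibility conditions and f(e',x') ≤ f(e,x) or f(e'',x'') ≤ f(e,x). -/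
open Real Finset
open scoped Classical

/-- The ℓ₁ (rectilinear) norm on ℝ². -/
noncomputable def l1 (p : ℝ × ℝ) : ℝ := |p.1| + |p.2|

/-- Objective function: f(e,x) = Σ ωᵢ · min(‖x−aᵢ‖₁, ‖e−aᵢ‖₁ + ℓ/k). -/
noncomputable def fObj {M : ℕ} (a : Fin M → ℝ × ℝ) (ω : Fin M → ℝ) (ℓ k : ℝ)
    (e x : ℝ × ℝ) : ℝ :=
  ∑ i, ω i * min (l1 (x - a i)) (l1 (e - a i) + ℓ / k)

/-- Captation region (as a set of indices of demand points). -/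
noncomputable def CR {M : ℕ} (a : Fin M → ℝ × ℝ) (ℓ k : ℝ) (e x : ℝ × ℝ) :
    Finset (Fin M) :=
  univ.filter fun i => l1 (e - a i) + ℓ / k ≤ l1 (x - a i)

/-- Boundary of the captation region. -/
noncomputable def bCR {M : ℕ} (a : Fin M → ℝ × ℝ) (ℓ k : ℝ) (e x : ℝ × ℝ) :
    Finset (Fin M) :=
  univ.filter fun i => l1 (x - a i) = l1 (e - a i) + ℓ / k

/-- Relative interior of the captation region. -/
noncomputable def riCR {M : ℕ} (a : Fin M → ℝ × ℝ) (ℓ k : ℝ) (e x : ℝ × ℝ) :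
    Finset (Fin M) :=
  CR a ℓ k e x \ bCR a ℓ k e x

/-- Demand points in the first quadrant of q : p₁ ≥ q₁, p₂ ≥ q₂. -/
noncomputable def Q1 {M : ℕ} (a : Fin M → ℝ × ℝ) (q : ℝ × ℝ) : Finset (Fin M) :=
  univ.filter fun i => q.1 ≤ (a i).1 ∧ q.2 ≤ (a i).2

/-- Demand points in the second quadrant of q : p₁ < q₁, p₂ ≥ q₂. -/
noncomputable def Q2 {M : ℕ} (a : Fin M → ℝ × ℝ) (q : ℝ × ℝ) : Finset (Fin M) :=
  univ.filter fun i => (a i).1 < q.1 ∧ q.2 ≤ (a i).2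

/-- Demand points in the third quadrant of q : p₁ < q₁, p₂ < q₂. -/
noncomputable def Q3 {M : ℕ} (a : Fin M → ℝ × ℝ) (q : ℝ × ℝ) : Finset (Fin M) :=
  univ.filter fun i => (a i).1 < q.1 ∧ (a i).2 < q.2

/-- Demand points in the fourth quadrant of q : p₁ ≥ q₁, p₂ < q₂. -/
noncomputable def Q4 {M : ℕ} (a : Fin M → ℝ × ℝ) (q : ℝ × ℝ) : Finset (Fin M) :=
  univ.filter fun i => q.1 ≤ (a i).1 ∧ (a i).2 < q.2

/-- ω¹ : total weight of demand points in C_x¹(A) ∖ CR. -/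
noncomputable def w1 {M : ℕ} (a : Fin M → ℝ × ℝ) (ω : Fin M → ℝ) (ℓ k : ℝ)
    (e x : ℝ × ℝ) : ℝ := ∑ j ∈ Q1 a x \ CR a ℓ k e x, ω j

/-- ω² : total weight of demand points in C_x²(A) ∖ ri(CR). -/
noncomputable def w2 {M : ℕ} (a : Fin M → ℝ × ℝ) (ω : Fin M → ℝ) (ℓ k : ℝ)
    (e x : ℝ × ℝ) : ℝ := ∑ j ∈ Q2 a x \ riCR a ℓ k e x, ω j

/-- ω³ : total weight of demand points in C_x³(A). -/
noncomputable def w3 {M : ℕ} (a : Fin M → ℝ × ℝ) (ω : Fin M → ℝ) (ℓ k : ℝ)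
    (e x : ℝ × ℝ) : ℝ := ∑ j ∈ Q3 a x, ω j

/-- ω⁴ : total weight of demand points in C_x⁴(A) ∖ CR. -/
noncomputable def w4 {M : ℕ} (a : Fin M → ℝ × ℝ) (ω : Fin M → ℝ) (ℓ k : ℝ)
    (e x : ℝ × ℝ) : ℝ := ∑ j ∈ Q4 a x \ CR a ℓ k e x, ω j

/-- ω⁺ with splitting coordinate 2 : weight of ri(CR) points with a_{j2} > e₂. -/
noncomputable def wP2 {M : ℕ} (a : Fin M → ℝ × ℝ) (ω : Fin M → ℝ) (ℓ k : ℝ)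
    (e x : ℝ × ℝ) : ℝ := ∑ j ∈ (riCR a ℓ k e x).filter (fun j => e.2 < (a j).2), ω j

/-- ω⁻ with splitting coordinate 2 : weight of ri(CR) points with a_{j2} < e₂. -/
noncomputable def wM2 {M : ℕ} (a : Fin M → ℝ × ℝ) (ω : Fin M → ℝ) (ℓ k : ℝ)
    (e x : ℝ × ℝ) : ℝ := ∑ j ∈ (riCR a ℓ k e x).filter (fun j => (a j).2 < e.2), ω j

/-- ω^{δ+} with splitting coordinate 2 : weight of ∂CR ∖ C_x²(A) points with a_{j2} > e₂. -/
noncomputable def wDP2 {M : ℕ} (a : Fin M → ℝ × ℝ) (ω : Fin M → ℝ) (ℓ k : ℝ)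
    (e x : ℝ × ℝ) : ℝ :=
  ∑ j ∈ ((bCR a ℓ k e x) \ Q2 a x).filter (fun j => e.2 < (a j).2), ω j

/-- ω^{δ−} with splitting coordinate 2 : weight of ∂CR ∖ C_x²(A) points with a_{j2} < e₂. -/
noncomputable def wDM2 {M : ℕ} (a : Fin M → ℝ × ℝ) (ω : Fin M → ℝ) (ℓ k : ℝ)
    (e x : ℝ × ℝ) : ℝ :=
  ∑ j ∈ ((bCR a ℓ k e x) \ Q2 a x).filter (fun j => (a j).2 < e.2), ω j

/-- ω⁺ with splitting coordinate 1 : weight of ri(CR) points with a_{j1} > e₁. -/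
noncomputable def wP1 {M : ℕ} (a : Fin M → ℝ × ℝ) (ω : Fin M → ℝ) (ℓ k : ℝ)
    (e x : ℝ × ℝ) : ℝ := ∑ j ∈ (riCR a ℓ k e x).filter (fun j => e.1 < (a j).1), ω j

/-- ω⁻ with splitting coordinate 1 : weight of ri(CR) points with a_{j1} < e₁. -/
noncomputable def wM1 {M : ℕ} (a : Fin M → ℝ × ℝ) (ω : Fin M → ℝ) (ℓ k : ℝ)
    (e x : ℝ × ℝ) : ℝ := ∑ j ∈ (riCR a ℓ k e x).filter (fun j => (a j).1 < e.1), ω j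

/-- ω^{δ+} with splitting coordinate 1 : weight of ∂CR ∖ C_x²(A) points with a_{j1} > e₁. -/
noncomputable def wDP1 {M : ℕ} (a : Fin M → ℝ × ℝ) (ω : Fin M → ℝ) (ℓ k : ℝ)
    (e x : ℝ × ℝ) : ℝ :=
  ∑ j ∈ ((bCR a ℓ k e x) \ Q2 a x).filter (fun j => e.1 < (a j).1), ω j

/-- ω^{δ−} with splitting coordinate 1 : weight of ∂CR ∖ C_x²(A) points with a_{j1} < e₁. -/
noncomputable def wDM1 {M : ℕ} (a : Fin M → ℝ × ℝ) (ω : Fin M → ℝ) (ℓ k : ℝ)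
    (e x : ℝ × ℝ) : ℝ :=
  ∑ j ∈ ((bCR a ℓ k e x) \ Q2 a x).filter (fun j => (a j).1 < e.1), ω j

/-- ω^a with splitting coordinate 2 (the coordinates as written). -/
noncomputable def wA2 {M : ℕ} (a : Fin M → ℝ × ℝ) (ω : Fin M → ℝ) (ℓ k : ℝ)
    (e x : ℝ × ℝ) : ℝ :=
  w1 a ω ℓ k e x - w2 a ω ℓ k e x - w3 a ω ℓ k e x + w4 a ω ℓ k e x

/-- ω^b with splitting coordinate 2. -/
noncomputable def wB2 {M : ℕ} (a : Fin M → ℝ × ℝ) (ω : Fin M → ℝ) (ℓ k : ℝ)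
    (e x : ℝ × ℝ) : ℝ :=
  wP2 a ω ℓ k e x - wM2 a ω ℓ k e x + wDP2 a ω ℓ k e x

/-- ω^a with splitting coordinate 1 (coordinates interchanged: the roles of
C_x² and C_x⁴ are swapped). -/
noncomputable def wA1 {M : ℕ} (a : Fin M → ℝ × ℝ) (ω : Fin M → ℝ) (ℓ k : ℝ)
    (e x : ℝ × ℝ) : ℝ :=
  w1 a ω ℓ k e x - (∑ j ∈ Q4 a x \ riCR a ℓ k e x, ω j) - w3 a ω ℓ k e x
    + (∑ j ∈ Q2 a x \ CR a ℓ k e x, ω j)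

/-- ω^b with splitting coordinate 1 (coordinates interchanged: ∂CR points outside
C_x⁴ with a_{j1} > e₁ in the third summand). -/
noncomputable def wB1 {M : ℕ} (a : Fin M → ℝ × ℝ) (ω : Fin M → ℝ) (ℓ k : ℝ)
    (e x : ℝ × ℝ) : ℝ :=
  wP1 a ω ℓ k e x - wM1 a ω ℓ k e x
    + (∑ j ∈ ((bCR a ℓ k e x) \ Q4 a x).filter (fun j => e.1 < (a j).1), ω j)

/-! Helper lemmas -/

section Helpers

lemma perindex1 (lam beta X E A1 A2 x1 x2 e2 w : ℝ)
    (hQ3 : A1 < x1 → A2 < x2 → X < E) (hA2 : A2 ≠ e2) :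
    w * (if E ≤ X then
          (if X = E then (if A1 < x1 then -lam else if e2 < A2 then beta else -beta)
           else (if e2 < A2 then beta else -beta))
         else (if A1 < x1 then -lam else lam))
      = lam * (if (¬(A1 < x1) ∧ ¬(A2 < x2)) ∧ ¬(E ≤ X) then w else 0)
      - lam * (if ((A1 < x1) ∧ ¬(A2 < x2)) ∧ ¬(E ≤ X ∧ ¬(X = E)) then w else 0)
      - lam * (if (A1 < x1) ∧ (A2 < x2) then w else 0)
      + lam * (if (¬(A1 < x1) ∧ (A2 < x2)) ∧ ¬(E ≤ X) then w else 0)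
      + beta * (if ((E ≤ X) ∧ ¬(X = E)) ∧ (e2 < A2) then w else 0)
      - beta * (if ((E ≤ X) ∧ ¬(X = E)) ∧ (A2 < e2) then w else 0)
      + beta * (if ((X = E) ∧ ¬((A1 < x1) ∧ ¬(A2 < x2))) ∧ (e2 < A2) then w else 0)
      - beta * (if ((X = E) ∧ ¬((A1 < x1) ∧ ¬(A2 < x2))) ∧ (A2 < e2) then w else 0) := by
  by_cases h1 : A1 < x1 <;> by_cases h2 : A2 < x2 <;> by_cases hc : E ≤ X <;>
    by_cases hb : X = E <;> by_cases h5 : e2 < A2 <;> by_cases h6 : A2 < e2 <;>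
    first
      | exact absurd h6 (lt_asymm h5)
      | exact absurd (le_antisymm (not_lt.mp h5) (not_lt.mp h6)) hA2
      | exact absurd (le_of_eq hb.symm) hc
      | exact absurd hc (not_le.mpr (hQ3 h1 h2))
      | (simp [h1, h2, hc, hb, h5, h6]; try ring)

lemma perindex2 (lam beta X E A1 A2 x1 x2 e2 w : ℝ)
    (hQ3 : A1 < x1 → A2 < x2 → X < E) (hA2 : A2 ≠ e2) :
    w * (if E ≤ X then
          (if X = E then (if A1 < x1 then lam else if e2 < A2 then -beta else -lam)
           else (if e2 < A2 then -beta else beta))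
         else (if A1 < x1 then lam else -lam))
      = -(lam * (if (¬(A1 < x1) ∧ ¬(A2 < x2)) ∧ ¬(E ≤ X) then w else 0))
      + lam * (if ((A1 < x1) ∧ ¬(A2 < x2)) ∧ ¬(E ≤ X ∧ ¬(X = E)) then w else 0)
      + lam * (if (A1 < x1) ∧ (A2 < x2) then w else 0)
      - lam * (if (¬(A1 < x1) ∧ (A2 < x2)) ∧ ¬(E ≤ X) then w else 0)
      - beta * (if ((E ≤ X) ∧ ¬(X = E)) ∧ (e2 < A2) then w else 0)
      + beta * (if ((E ≤ X) ∧ ¬(X = E)) ∧ (A2 < e2) then w else 0)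
      - beta * (if ((X = E) ∧ ¬((A1 < x1) ∧ ¬(A2 < x2))) ∧ (e2 < A2) then w else 0)
      - lam * (if ((X = E) ∧ ¬((A1 < x1) ∧ ¬(A2 < x2))) ∧ (A2 < e2) then w else 0) := by
  by_cases h1 : A1 < x1 <;> by_cases h2 : A2 < x2 <;> by_cases hc : E ≤ X <;>
    by_cases hb : X = E <;> by_cases h5 : e2 < A2 <;> by_cases h6 : A2 < e2 <;>
    first
      | exact absurd h6 (lt_asymm h5)
      | exact absurd (le_antisymm (not_lt.mp h5) (not_lt.mp h6)) hA2
      | exact absurd (le_of_eq hb.symm) hc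
      | exact absurd hc (not_le.mpr (hQ3 h1 h2))
      | (simp [h1, h2, hc, hb, h5, h6]; try ring)

lemma minb1 (lam beta X E X' E' A1 x1 A2 e2 : ℝ)
    (hX' : X' = X + (if A1 < x1 then -lam else lam))
    (hE' : E' = E + (if e2 < A2 then beta else -beta)) :
    min X' E' ≤ min X E +
      (if E ≤ X then
        (if X = E then (if A1 < x1 then -lam else if e2 < A2 then beta else -beta)
         else (if e2 < A2 then beta else -beta))
       else (if A1 < x1 then -lam else lam)) := by
  by_cases hc : E ≤ X
  · by_cases hb : X = E
    · by_cases h1 : A1 < x1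
      · rw [if_pos hc, if_pos hb, if_pos h1, min_eq_left (le_of_eq hb)]
        calc min X' E' ≤ X' := min_le_left _ _
          _ = X + -lam := by rw [hX', if_pos h1]
      · rw [if_pos hc, if_pos hb, if_neg h1, min_eq_left (le_of_eq hb)]
        calc min X' E' ≤ E' := min_le_right _ _
          _ = E + _ := hE'
          _ = X + _ := by rw [hb]
    · rw [if_pos hc, if_neg hb, min_eq_right hc]
      calc min X' E' ≤ E' := min_le_right _ _
        _ = E + _ := hE'
  · rw [if_neg hc, min_eq_left (not_le.mp hc).le]
    calc min X' E' ≤ X' := min_le_left _ _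
      _ = X + _ := hX'

lemma minb2 (lam beta X E X' E' A1 x1 A2 e2 : ℝ)
    (hX' : X' = X + (if A1 < x1 then lam else -lam))
    (hE' : E' = E + (if e2 < A2 then -beta else beta)) :
    min X' E' ≤ min X E +
      (if E ≤ X then
        (if X = E then (if A1 < x1 then lam else if e2 < A2 then -beta else -lam)
         else (if e2 < A2 then -beta else beta))
       else (if A1 < x1 then lam else -lam)) := by
  by_cases hc : E ≤ X
  · by_cases hb : X = E
    · by_cases h1 : A1 < x1
      · rw [if_pos hc, if_pos hb, if_pos h1, min_eq_left (le_of_eq hb)]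
        calc min X' E' ≤ X' := min_le_left _ _
          _ = X + lam := by rw [hX', if_pos h1]
      · by_cases h5 : e2 < A2
        · rw [if_pos hc, if_pos hb, if_neg h1, if_pos h5, min_eq_left (le_of_eq hb)]
          calc min X' E' ≤ E' := min_le_right _ _
            _ = E + -beta := by rw [hE', if_pos h5]
            _ = X + -beta := by rw [hb]
        · rw [if_pos hc, if_pos hb, if_neg h1, if_neg h5, min_eq_left (le_of_eq hb)]
          calc min X' E' ≤ X' := min_le_left _ _
            _ = X + -lam := by rw [hX', if_neg h1]
    · rw [if_pos hc, if_neg hb, min_eq_right hc]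
      calc min X' E' ≤ E' := min_le_right _ _
        _ = E + _ := hE'
  · rw [if_neg hc, min_eq_left (not_le.mp hc).le]
    calc min X' E' ≤ X' := min_le_left _ _
      _ = X + _ := hX'

lemma l1_def (p : ℝ × ℝ) : l1 p = |p.1| + |p.2| := rfl

lemma l1_eq (p q : ℝ × ℝ) : l1 (p - q) = |p.1 - q.1| + |p.2 - q.2| := by
  simp [l1]

lemma fObj_le_of_min_le {M : ℕ} (a : Fin M → ℝ × ℝ) (ω : Fin M → ℝ) (ℓ k : ℝ)
    (hω : ∀ i, 0 ≤ ω i) (e x e' x' : ℝ × ℝ) (d : Fin M → ℝ)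
    (h : ∀ i, min (l1 (x' - a i)) (l1 (e' - a i) + ℓ / k)
        ≤ min (l1 (x - a i)) (l1 (e - a i) + ℓ / k) + d i) :
    fObj a ω ℓ k e' x' ≤ fObj a ω ℓ k e x + ∑ i, ω i * d i := by
  rw [fObj, fObj, ← Finset.sum_add_distrib]
  refine Finset.sum_le_sum fun i _ => ?_
  have h2 := mul_le_mul_of_nonneg_left (h i) (hω i)
  rw [mul_add] at h2
  linarith

lemma w1_eq {M : ℕ} (a : Fin M → ℝ × ℝ) (ω : Fin M → ℝ) (ℓ k : ℝ) (e x : ℝ × ℝ) :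
    w1 a ω ℓ k e x = ∑ i, if (¬((a i).1 < x.1) ∧ ¬((a i).2 < x.2)) ∧
        ¬(l1 (e - a i) + ℓ / k ≤ l1 (x - a i)) then ω i else 0 := by
  rw [w1, ← Finset.sum_filter]
  congr 1
  ext i
  simp [Q1, CR, not_lt]

lemma w2_eq {M : ℕ} (a : Fin M → ℝ × ℝ) (ω : Fin M → ℝ) (ℓ k : ℝ) (e x : ℝ × ℝ) :
    w2 a ω ℓ k e x = ∑ i, if (((a i).1 < x.1) ∧ ¬((a i).2 < x.2)) ∧
        ¬((l1 (e - a i) + ℓ / k ≤ l1 (x - a i)) ∧ ¬(l1 (x - a i) = l1 (e - a i) + ℓ / k))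
        then ω i else 0 := by
  rw [w2, ← Finset.sum_filter]
  congr 1
  ext i
  simp only [riCR, CR, bCR, Q2, Finset.mem_sdiff, Finset.mem_filter, Finset.mem_univ,
    true_and, not_lt]

lemma w3_eq {M : ℕ} (a : Fin M → ℝ × ℝ) (ω : Fin M → ℝ) (ℓ k : ℝ) (e x : ℝ × ℝ) :
    w3 a ω ℓ k e x = ∑ i, if ((a i).1 < x.1) ∧ ((a i).2 < x.2) then ω i else 0 := by
  rw [w3, ← Finset.sum_filter]
  rfl

lemma w4_eq {M : ℕ} (a : Fin M → ℝ × ℝ) (ω : Fin M → ℝ) (ℓ k : ℝ) (e x : ℝ × ℝ) :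
    w4 a ω ℓ k e x = ∑ i, if (¬((a i).1 < x.1) ∧ ((a i).2 < x.2)) ∧
        ¬(l1 (e - a i) + ℓ / k ≤ l1 (x - a i)) then ω i else 0 := by
  rw [w4, ← Finset.sum_filter]
  congr 1
  ext i
  simp [Q4, CR, not_lt]

lemma wP2_eq {M : ℕ} (a : Fin M → ℝ × ℝ) (ω : Fin M → ℝ) (ℓ k : ℝ) (e x : ℝ × ℝ) :
    wP2 a ω ℓ k e x = ∑ i, if ((l1 (e - a i) + ℓ / k ≤ l1 (x - a i)) ∧
        ¬(l1 (x - a i) = l1 (e - a i) + ℓ / k)) ∧ (e.2 < (a i).2) then ω i else 0 := by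
  rw [wP2, ← Finset.sum_filter]
  congr 1
  ext i
  simp only [riCR, CR, bCR, Finset.mem_filter, Finset.mem_sdiff, Finset.mem_univ, true_and]

lemma wM2_eq {M : ℕ} (a : Fin M → ℝ × ℝ) (ω : Fin M → ℝ) (ℓ k : ℝ) (e x : ℝ × ℝ) :
    wM2 a ω ℓ k e x = ∑ i, if ((l1 (e - a i) + ℓ / k ≤ l1 (x - a i)) ∧
        ¬(l1 (x - a i) = l1 (e - a i) + ℓ / k)) ∧ ((a i).2 < e.2) then ω i else 0 := by
  rw [wM2, ← Finset.sum_filter]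
  congr 1
  ext i
  simp only [riCR, CR, bCR, Finset.mem_filter, Finset.mem_sdiff, Finset.mem_univ, true_and]

lemma wDP2_eq {M : ℕ} (a : Fin M → ℝ × ℝ) (ω : Fin M → ℝ) (ℓ k : ℝ) (e x : ℝ × ℝ) :
    wDP2 a ω ℓ k e x = ∑ i, if ((l1 (x - a i) = l1 (e - a i) + ℓ / k) ∧
        ¬(((a i).1 < x.1) ∧ ¬((a i).2 < x.2))) ∧ (e.2 < (a i).2) then ω i else 0 := by
  rw [wDP2, ← Finset.sum_filter]
  congr 1
  ext i
  simp only [bCR, Q2, Finset.mem_filter, Finset.mem_sdiff, Finset.mem_univ, true_and, not_lt]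

lemma wDM2_eq {M : ℕ} (a : Fin M → ℝ × ℝ) (ω : Fin M → ℝ) (ℓ k : ℝ) (e x : ℝ × ℝ) :
    wDM2 a ω ℓ k e x = ∑ i, if ((l1 (x - a i) = l1 (e - a i) + ℓ / k) ∧
        ¬(((a i).1 < x.1) ∧ ¬((a i).2 < x.2))) ∧ ((a i).2 < e.2) then ω i else 0 := by
  rw [wDM2, ← Finset.sum_filter]
  congr 1
  ext i
  simp only [bCR, Q2, Finset.mem_filter, Finset.mem_sdiff, Finset.mem_univ, true_and, not_lt]

end Helpers
set_option maxHeartbeats 1600000 in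
/-- Theorem 2.3: if the segment (with neither endpoint on the corresponding fundamental
lines of the demand points) does not satisfy the critical-angle condition
ω^a < 0 < ω^b with tan θ = ω^b/(−ω^a), then some admissible diagonal perturbation
(rotation of the segment) does not increase the objective function. -/
theorem diagonal_improvement {M : ℕ} (a : Fin M → ℝ × ℝ) (ω : Fin M → ℝ)
    (ℓ k : ℝ) (hℓ : 0 < ℓ) (hk : 1 ≤ k) (hω : ∀ i, 0 < ω i)
    (e x : ℝ × ℝ) (θ : ℝ) (hθ : θ ∈ Set.Ioo 0 (π / 2))
    (hdir : e - x = (ℓ * Real.cos θ, ℓ * Real.sin θ))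
    (hx1 : x.1 ≤ 0) (he1 : 0 ≤ e.1) (hx2 : x.2 ≤ 0) (he2 : 0 ≤ e.2)
    (hne : ∀ i, (a i).1 ≠ x.1 ∧ (a i).2 ≠ e.2)
    (hnot : ¬(wA2 a ω ℓ k e x < 0 ∧ 0 < wB2 a ω ℓ k e x ∧
      Real.tan θ = wB2 a ω ℓ k e x / (-(wA2 a ω ℓ k e x)))) :
    ∃ θ' θ'' lam1 beta1 lam2 beta2 : ℝ, ∃ x' e' x'' e'' : ℝ × ℝ,
      0 < θ' ∧ θ' < θ ∧ θ < θ'' ∧ θ'' ≤ π / 2 ∧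
      lam1 = ℓ * (Real.cos θ' - Real.cos θ) ∧
      beta1 = ℓ * (Real.sin θ - Real.sin θ') ∧
      lam2 = ℓ * (Real.cos θ - Real.cos θ'') ∧
      beta2 = ℓ * (Real.sin θ'' - Real.sin θ) ∧
      x' = x + (-lam1, 0) ∧ e' = e + (0, -beta1) ∧
      x'' = x + (lam2, 0) ∧ e'' = e + (0, beta2) ∧
      CR a ℓ k e' x' \ bCR a ℓ k e x = CR a ℓ k e x \ bCR a ℓ k e x ∧
      CR a ℓ k e'' x'' \ bCR a ℓ k e x = CR a ℓ k e x \ bCR a ℓ k e x ∧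
      Q1 a x' = Q1 a x ∧ Q1 a x'' = Q1 a x ∧
      Q2 a x' = Q2 a x ∧ Q2 a x'' = Q2 a x ∧
      Q3 a x' = Q3 a x ∧ Q3 a x'' = Q3 a x ∧
      Q4 a x' = Q4 a x ∧ Q4 a x'' = Q4 a x ∧
      (∀ i, ((a i).2 < e.2 → (a i).2 < e.2 - beta1) ∧
            (e.2 < (a i).2 → e.2 + beta2 < (a i).2)) ∧
      (fObj a ω ℓ k e' x' ≤ fObj a ω ℓ k e x ∨
       fObj a ω ℓ k e'' x'' ≤ fObj a ω ℓ k e x) := by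
  classical
  obtain ⟨hθ0, hθπ⟩ := hθ
  have hπ : (0:ℝ) < π := Real.pi_pos
  have hk0 : (0:ℝ) < k := lt_of_lt_of_le one_pos hk
  have hℓk : 0 < ℓ / k := div_pos hℓ hk0
  have hex1 : e.1 - x.1 = ℓ * Real.cos θ := by
    have h := congrArg Prod.fst hdir; simpa using h
  have hex2 : e.2 - x.2 = ℓ * Real.sin θ := by
    have h := congrArg Prod.snd hdir; simpa using h
  have hcosθ : 0 < Real.cos θ :=
    Real.cos_pos_of_mem_Ioo ⟨by linarith, hθπ⟩
  have hsinθ : 0 < Real.sin θ :=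
    Real.sin_pos_of_pos_of_lt_pi hθ0 (by linarith)
  -- the third-quadrant points are strictly outside the captation region
  have hQ3f : ∀ i, (a i).1 < x.1 → (a i).2 < x.2 →
      l1 (x - a i) < l1 (e - a i) + ℓ / k := by
    intro i h1 h2
    rw [l1_eq, l1_eq]
    rw [abs_of_pos (show (0:ℝ) < x.1 - (a i).1 by linarith),
        abs_of_pos (show (0:ℝ) < x.2 - (a i).2 by linarith),
        abs_of_pos (show (0:ℝ) < e.1 - (a i).1 by linarith [mul_pos hℓ hcosθ]),
        abs_of_pos (show (0:ℝ) < e.2 - (a i).2 by linarith [mul_pos hℓ hsinθ])]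
    linarith [mul_pos hℓ hcosθ, mul_pos hℓ hsinθ]
  -- margin δ
  set μ : Fin M → ℝ := fun i => min (min |x.1 - (a i).1| |e.2 - (a i).2|)
    (if l1 (x - a i) = l1 (e - a i) + ℓ / k then 1
     else |l1 (x - a i) - (l1 (e - a i) + ℓ / k)|) with hμdef
  set δ : ℝ := (insert (1:ℝ) (Finset.image μ Finset.univ)).min'
      (Finset.insert_nonempty _ _) with hδdef
  have hδpos : 0 < δ := by
    rw [hδdef]
    rw [Finset.lt_min'_iff]
    intro b hb
    rcases Finset.mem_insert.mp hb with rfl | hb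
    · exact one_pos
    · obtain ⟨i, _, rfl⟩ := Finset.mem_image.mp hb
      rw [hμdef]
      refine lt_min (lt_min ?_ ?_) ?_
      · exact abs_pos.mpr (sub_ne_zero.mpr (Ne.symm (hne i).1))
      · exact abs_pos.mpr (sub_ne_zero.mpr (Ne.symm (hne i).2))
      · split_ifs with h
        · exact one_pos
        · exact abs_pos.mpr (sub_ne_zero.mpr h)
  have hδμ : ∀ i, δ ≤ μ i := by
    intro i
    rw [hδdef]
    exact Finset.min'_le _ _ (Finset.mem_insert.mpr (Or.inr
      (Finset.mem_image.mpr ⟨i, Finset.mem_univ i, rfl⟩)))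
  have hδx1 : ∀ i, δ ≤ |x.1 - (a i).1| := fun i =>
    (hδμ i).trans ((min_le_left _ _).trans (min_le_left _ _))
  have hδe2 : ∀ i, δ ≤ |e.2 - (a i).2| := fun i =>
    (hδμ i).trans ((min_le_left _ _).trans (min_le_right _ _))
  have hδCR : ∀ i, l1 (x - a i) ≠ l1 (e - a i) + ℓ / k →
      δ ≤ |l1 (x - a i) - (l1 (e - a i) + ℓ / k)| := by
    intro i h
    have h2 := (hδμ i).trans (min_le_right _ _)
    rwa [if_neg h] at h2
  -- abbreviations
  set WA := wA2 a ω ℓ k e x with hWAdef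
  set WB := wB2 a ω ℓ k e x with hWBdef
  set G := Real.sin θ * WA + Real.cos θ * WB with hGdef
  have hGne : 0 < WB → G ≠ 0 := by
    intro hWB hG0
    apply hnot
    have hG0' : Real.sin θ * WA + Real.cos θ * WB = 0 := by rw [← hGdef]; exact hG0
    have h2 : 0 < Real.cos θ * WB := mul_pos hcosθ hWB
    have h1 : Real.sin θ * WA = -(Real.cos θ * WB) := by linarith
    have hWA : WA < 0 := by
      rcases lt_trichotomy WA 0 with h | h | h
      · exact h
      · exfalso; rw [h, mul_zero] at h1; linarith
      · exfalso; nlinarith [mul_pos hsinθ h]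
    refine ⟨hWA, hWB, ?_⟩
    rw [Real.tan_eq_sin_div_cos, div_eq_div_iff hcosθ.ne' (by linarith)]
    linear_combination -hG0'
  set ε0 : ℝ := if 0 < WB then |G| * Real.sin (θ / 2) / WB else 1 with hε0def
  have hsθ2 : 0 < Real.sin (θ / 2) :=
    Real.sin_pos_of_pos_of_lt_pi (by linarith) (by linarith)
  have hε0 : 0 < ε0 := by
    rw [hε0def]
    split_ifs with h
    · exact div_pos (mul_pos (abs_pos.mpr (hGne h)) hsθ2) h
    · exact one_pos
  set u : ℝ := min (min (θ / 2) (π / 2 - θ)) (min (δ / (4 * ℓ)) ε0) with hudef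
  have hu0 : 0 < u := lt_min (lt_min (by linarith) (by linarith))
      (lt_min (div_pos hδpos (by linarith)) hε0)
  have huθ : u ≤ θ / 2 := (min_le_left _ _).trans (min_le_left _ _)
  have huπ : u ≤ π / 2 - θ := (min_le_left _ _).trans (min_le_right _ _)
  have huδ : u ≤ δ / (4 * ℓ) := (min_le_right _ _).trans (min_le_left _ _)
  have huε : u ≤ ε0 := (min_le_right _ _).trans (min_le_right _ _)
  -- trigonometric identities and bounds
  have hsinu2 : 0 < Real.sin (u / 2) :=
    Real.sin_pos_of_pos_of_lt_pi (by linarith) (by linarith)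
  have hsinu2' : Real.sin (u / 2) ≤ u / 2 := Real.sin_le (by linarith)
  have hc1 : Real.cos (θ - u) - Real.cos θ
      = 2 * Real.sin (θ - u / 2) * Real.sin (u / 2) := by
    have h := Real.cos_sub_cos (θ - u) θ
    rw [show (θ - u + θ) / 2 = θ - u / 2 by ring, show (θ - u - θ) / 2 = -(u / 2) by ring,
      Real.sin_neg] at h
    linarith
  have hs1 : Real.sin θ - Real.sin (θ - u)
      = 2 * Real.cos (θ - u / 2) * Real.sin (u / 2) := by
    have h := Real.sin_sub_sin θ (θ - u)
    rw [show (θ - (θ - u)) / 2 = u / 2 by ring, show (θ + (θ - u)) / 2 = θ - u / 2 by ring] at h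
    linarith
  have hc2 : Real.cos θ - Real.cos (θ + u)
      = 2 * Real.sin (θ + u / 2) * Real.sin (u / 2) := by
    have h := Real.cos_sub_cos θ (θ + u)
    rw [show (θ + (θ + u)) / 2 = θ + u / 2 by ring, show (θ - (θ + u)) / 2 = -(u / 2) by ring,
      Real.sin_neg] at h
    linarith
  have hs2 : Real.sin (θ + u) - Real.sin θ
      = 2 * Real.cos (θ + u / 2) * Real.sin (u / 2) := by
    have h := Real.sin_sub_sin (θ + u) θ
    rw [show (θ + u - θ) / 2 = u / 2 by ring, show (θ + u + θ) / 2 = θ + u / 2 by ring] at h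
    linarith
  have hsma : Real.sin (θ / 2) ≤ Real.sin (θ - u / 2) :=
    Real.strictMonoOn_sin.monotoneOn ⟨by linarith, by linarith⟩
      ⟨by linarith, by linarith⟩ (by linarith)
  have hsmb : Real.sin (θ / 2) ≤ Real.sin (θ + u / 2) :=
    Real.strictMonoOn_sin.monotoneOn ⟨by linarith, by linarith⟩
      ⟨by linarith, by linarith⟩ (by linarith)
  have hcma : 0 < Real.cos (θ - u / 2) :=
    Real.cos_pos_of_mem_Ioo ⟨by linarith, by linarith⟩
  have hcmb : 0 < Real.cos (θ + u / 2) :=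
    Real.cos_pos_of_mem_Ioo ⟨by linarith, by linarith⟩
  have hsla : Real.sin (θ - u / 2) ≤ 1 := Real.sin_le_one _
  have hslb : Real.sin (θ + u / 2) ≤ 1 := Real.sin_le_one _
  have hcla : Real.cos (θ - u / 2) ≤ 1 := Real.cos_le_one _
  have hclb : Real.cos (θ + u / 2) ≤ 1 := Real.cos_le_one _
  have hsθa : 0 < Real.sin (θ - u / 2) := lt_of_lt_of_le hsθ2 hsma
  have hsθb : 0 < Real.sin (θ + u / 2) := lt_of_lt_of_le hsθ2 hsmb
  -- the four perturbation magnitudes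
  set lam1 : ℝ := ℓ * (Real.cos (θ - u) - Real.cos θ) with hlam1def
  set beta1 : ℝ := ℓ * (Real.sin θ - Real.sin (θ - u)) with hbeta1def
  set lam2 : ℝ := ℓ * (Real.cos θ - Real.cos (θ + u)) with hlam2def
  set beta2 : ℝ := ℓ * (Real.sin (θ + u) - Real.sin θ) with hbeta2def
  have hlam1pos : 0 < lam1 := by rw [hlam1def, hc1]; exact mul_pos hℓ (mul_pos (mul_pos two_pos hsθa) hsinu2)
  have hbeta1pos : 0 < beta1 := by rw [hbeta1def, hs1]; exact mul_pos hℓ (mul_pos (mul_pos two_pos hcma) hsinu2)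
  have hlam2pos : 0 < lam2 := by rw [hlam2def, hc2]; exact mul_pos hℓ (mul_pos (mul_pos two_pos hsθb) hsinu2)
  have hbeta2pos : 0 < beta2 := by rw [hbeta2def, hs2]; exact mul_pos hℓ (mul_pos (mul_pos two_pos hcmb) hsinu2)
  have hℓu : ℓ * u ≤ δ / 4 := by
    have h : ℓ * u ≤ ℓ * (δ / (4 * ℓ)) := mul_le_mul_of_nonneg_left huδ hℓ.le
    rw [mul_div_assoc'] at h
    calc ℓ * u ≤ ℓ * δ / (4 * ℓ) := h
      _ = δ / 4 := by field_simp
  have h2sa : 2 * Real.sin (θ - u / 2) * Real.sin (u / 2) ≤ u := by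
    have h := mul_le_mul hsla hsinu2' hsinu2.le zero_le_one
    linarith
  have h2sb : 2 * Real.cos (θ - u / 2) * Real.sin (u / 2) ≤ u := by
    have h := mul_le_mul hcla hsinu2' hsinu2.le zero_le_one
    linarith
  have h2sc : 2 * Real.sin (θ + u / 2) * Real.sin (u / 2) ≤ u := by
    have h := mul_le_mul hslb hsinu2' hsinu2.le zero_le_one
    linarith
  have h2sd : 2 * Real.cos (θ + u / 2) * Real.sin (u / 2) ≤ u := by
    have h := mul_le_mul hclb hsinu2' hsinu2.le zero_le_one
    linarith
  have hlam1δ : lam1 ≤ δ / 4 := by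
    rw [hlam1def, hc1]
    have := mul_le_mul_of_nonneg_left h2sa hℓ.le
    linarith
  have hbeta1δ : beta1 ≤ δ / 4 := by
    rw [hbeta1def, hs1]
    have := mul_le_mul_of_nonneg_left h2sb hℓ.le
    linarith
  have hlam2δ : lam2 ≤ δ / 4 := by
    rw [hlam2def, hc2]
    have := mul_le_mul_of_nonneg_left h2sc hℓ.le
    linarith
  have hbeta2δ : beta2 ≤ δ / 4 := by
    rw [hbeta2def, hs2]
    have := mul_le_mul_of_nonneg_left h2sd hℓ.le
    linarith
  -- the perturbed points
  set x' : ℝ × ℝ := x + (-lam1, 0) with hx'def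
  set e' : ℝ × ℝ := e + (0, -beta1) with he'def
  set x'' : ℝ × ℝ := x + (lam2, 0) with hx''def
  set e'' : ℝ × ℝ := e + (0, beta2) with he''def
  -- exact effect of the perturbations on the ℓ¹ distances
  have hX1 : ∀ i, l1 (x' - a i)
      = l1 (x - a i) + (if (a i).1 < x.1 then -lam1 else lam1) := by
    intro i
    have hm := hδx1 i
    have hc1' : (x' - a i).1 = x.1 - (a i).1 - lam1 := by
      rw [hx'def]; simp [Prod.fst_add]; ring
    have hc2' : (x' - a i).2 = x.2 - (a i).2 := by
      rw [hx'def]; simp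
    rw [l1_def, hc1', hc2', l1_eq]
    rcases lt_or_gt_of_ne (hne i).1 with h | h
    · have habs : |x.1 - (a i).1| = x.1 - (a i).1 := abs_of_pos (by linarith)
      rw [habs] at hm
      rw [if_pos h, habs, abs_of_pos (show (0:ℝ) < x.1 - (a i).1 - lam1 by linarith)]
      ring
    · rw [if_neg (not_lt.mpr h.le),
        abs_of_neg (show x.1 - (a i).1 - lam1 < 0 by linarith),
        abs_of_neg (show x.1 - (a i).1 < 0 by linarith)]
      ring
  have hE1 : ∀ i, l1 (e' - a i)
      = l1 (e - a i) + (if e.2 < (a i).2 then beta1 else -beta1) := by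
    intro i
    have hm := hδe2 i
    have hc1' : (e' - a i).1 = e.1 - (a i).1 := by rw [he'def]; simp
    have hc2' : (e' - a i).2 = e.2 - (a i).2 - beta1 := by
      rw [he'def]; simp [Prod.snd_add]; ring
    rw [l1_def, hc1', hc2', l1_eq]
    rcases lt_or_gt_of_ne (hne i).2 with h | h
    · have habs : |e.2 - (a i).2| = e.2 - (a i).2 := abs_of_pos (by linarith)
      rw [habs] at hm
      rw [if_neg (not_lt.mpr h.le), habs,
        abs_of_pos (show (0:ℝ) < e.2 - (a i).2 - beta1 by linarith)]
      ring
    · rw [if_pos h, abs_of_neg (show e.2 - (a i).2 - beta1 < 0 by linarith),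
        abs_of_neg (show e.2 - (a i).2 < 0 by linarith)]
      ring
  have hX2 : ∀ i, l1 (x'' - a i)
      = l1 (x - a i) + (if (a i).1 < x.1 then lam2 else -lam2) := by
    intro i
    have hm := hδx1 i
    have hc1' : (x'' - a i).1 = x.1 - (a i).1 + lam2 := by
      rw [hx''def]; simp [Prod.fst_add]; ring
    have hc2' : (x'' - a i).2 = x.2 - (a i).2 := by
      rw [hx''def]; simp
    rw [l1_def, hc1', hc2', l1_eq]
    rcases lt_or_gt_of_ne (hne i).1 with h | h
    · have habs : |x.1 - (a i).1| = x.1 - (a i).1 := abs_of_pos (by linarith)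
      rw [if_pos h, habs, abs_of_pos (show (0:ℝ) < x.1 - (a i).1 + lam2 by linarith)]
      ring
    · have habs : |x.1 - (a i).1| = -(x.1 - (a i).1) := abs_of_neg (by linarith)
      rw [habs] at hm
      rw [if_neg (not_lt.mpr h.le), habs,
        abs_of_neg (show x.1 - (a i).1 + lam2 < 0 by linarith)]
      ring
  have hE2 : ∀ i, l1 (e'' - a i)
      = l1 (e - a i) + (if e.2 < (a i).2 then -beta2 else beta2) := by
    intro i
    have hm := hδe2 i
    have hc1' : (e'' - a i).1 = e.1 - (a i).1 := by rw [he''def]; simp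
    have hc2' : (e'' - a i).2 = e.2 - (a i).2 + beta2 := by
      rw [he''def]; simp [Prod.snd_add]; ring
    rw [l1_def, hc1', hc2', l1_eq]
    rcases lt_or_gt_of_ne (hne i).2 with h | h
    · have habs : |e.2 - (a i).2| = e.2 - (a i).2 := abs_of_pos (by linarith)
      rw [if_neg (not_lt.mpr h.le), habs,
        abs_of_pos (show (0:ℝ) < e.2 - (a i).2 + beta2 by linarith)]
      ring
    · have habs : |e.2 - (a i).2| = -(e.2 - (a i).2) := abs_of_neg (by linarith)
      rw [habs] at hm
      rw [if_pos h, habs, abs_of_neg (show e.2 - (a i).2 + beta2 < 0 by linarith)]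
      ring
  -- quadrant preservation
  have hx'1 : x'.1 = x.1 + -lam1 := rfl
  have hx'2 : x'.2 = x.2 + 0 := rfl
  have hx''1 : x''.1 = x.1 + lam2 := rfl
  have hx''2 : x''.2 = x.2 + 0 := rfl
  have hQx' : ∀ i, (x'.1 ≤ (a i).1 ↔ x.1 ≤ (a i).1) ∧ ((a i).1 < x'.1 ↔ (a i).1 < x.1) := by
    intro i
    have hm := hδx1 i
    rw [hx'1]
    rcases lt_or_gt_of_ne (hne i).1 with h | h
    · have habs : |x.1 - (a i).1| = x.1 - (a i).1 := abs_of_pos (by linarith)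
      rw [habs] at hm
      exact ⟨iff_of_false (by linarith) (by linarith), iff_of_true (by linarith) h⟩
    · exact ⟨iff_of_true (by linarith) h.le,
        iff_of_false (by linarith) (not_lt.mpr h.le)⟩
  have hQx'' : ∀ i, (x''.1 ≤ (a i).1 ↔ x.1 ≤ (a i).1) ∧ ((a i).1 < x''.1 ↔ (a i).1 < x.1) := by
    intro i
    have hm := hδx1 i
    rw [hx''1]
    rcases lt_or_gt_of_ne (hne i).1 with h | h
    · have habs : |x.1 - (a i).1| = x.1 - (a i).1 := abs_of_pos (by linarith)
      rw [habs] at hm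
      exact ⟨iff_of_false (by linarith) (by linarith), iff_of_true (by linarith) h⟩
    · have habs : |x.1 - (a i).1| = -(x.1 - (a i).1) := abs_of_neg (by linarith)
      rw [habs] at hm
      exact ⟨iff_of_true (by linarith) h.le,
        iff_of_false (by linarith) (not_lt.mpr h.le)⟩
  have hQ1p : Q1 a x' = Q1 a x := by
    ext i
    simp only [Q1, Finset.mem_filter, Finset.mem_univ, true_and, hx'2, add_zero]
    exact and_congr_left' ((hQx' i).1)
  have hQ1pp : Q1 a x'' = Q1 a x := by
    ext i
    simp only [Q1, Finset.mem_filter, Finset.mem_univ, true_and, hx''2, add_zero]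
    exact and_congr_left' ((hQx'' i).1)
  have hQ2p : Q2 a x' = Q2 a x := by
    ext i
    simp only [Q2, Finset.mem_filter, Finset.mem_univ, true_and, hx'2, add_zero]
    exact and_congr_left' ((hQx' i).2)
  have hQ2pp : Q2 a x'' = Q2 a x := by
    ext i
    simp only [Q2, Finset.mem_filter, Finset.mem_univ, true_and, hx''2, add_zero]
    exact and_congr_left' ((hQx'' i).2)
  have hQ3p : Q3 a x' = Q3 a x := by
    ext i
    simp only [Q3, Finset.mem_filter, Finset.mem_univ, true_and, hx'2, add_zero]
    exact and_congr_left' ((hQx' i).2)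
  have hQ3pp : Q3 a x'' = Q3 a x := by
    ext i
    simp only [Q3, Finset.mem_filter, Finset.mem_univ, true_and, hx''2, add_zero]
    exact and_congr_left' ((hQx'' i).2)
  have hQ4p : Q4 a x' = Q4 a x := by
    ext i
    simp only [Q4, Finset.mem_filter, Finset.mem_univ, true_and, hx'2, add_zero]
    exact and_congr_left' ((hQx' i).1)
  have hQ4pp : Q4 a x'' = Q4 a x := by
    ext i
    simp only [Q4, Finset.mem_filter, Finset.mem_univ, true_and, hx''2, add_zero]
    exact and_congr_left' ((hQx'' i).1)
  -- bounds on the conditional shifts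
  have habsA : ∀ (c : Prop) [Decidable c] (b : ℝ), 0 < b → b ≤ δ / 4 →
      (-(δ / 4) ≤ (if c then b else -b) ∧ (if c then b else -b) ≤ δ / 4) := by
    intro c _ b hb hbδ
    split_ifs <;> constructor <;> linarith
  have habsB : ∀ (c : Prop) [Decidable c] (b : ℝ), 0 < b → b ≤ δ / 4 →
      (-(δ / 4) ≤ (if c then -b else b) ∧ (if c then -b else b) ≤ δ / 4) := by
    intro c _ b hb hbδ
    split_ifs <;> constructor <;> linarith
  -- captation region preservation
  have hCRp : CR a ℓ k e' x' \ bCR a ℓ k e x = CR a ℓ k e x \ bCR a ℓ k e x := by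
    ext i
    simp only [Finset.mem_sdiff, CR, bCR, Finset.mem_filter, Finset.mem_univ, true_and]
    have hbx := habsB ((a i).1 < x.1) lam1 hlam1pos hlam1δ
    have hbe := habsA (e.2 < (a i).2) beta1 hbeta1pos hbeta1δ
    constructor
    · rintro ⟨h, hbne⟩
      refine ⟨?_, hbne⟩
      have hd := hδCR i hbne
      rw [hX1 i, hE1 i] at h
      rcases lt_or_gt_of_ne hbne with hlt | hgt
      · exfalso
        rw [abs_of_neg (show l1 (x - a i) - (l1 (e - a i) + ℓ / k) < 0 by linarith)] at hd
        linarith [hbx.1, hbx.2, hbe.1, hbe.2]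
      · linarith
    · rintro ⟨h, hbne⟩
      refine ⟨?_, hbne⟩
      have hd := hδCR i hbne
      rw [hX1 i, hE1 i]
      have hgt : l1 (e - a i) + ℓ / k < l1 (x - a i) := lt_of_le_of_ne h (Ne.symm hbne)
      rw [abs_of_pos (show (0:ℝ) < l1 (x - a i) - (l1 (e - a i) + ℓ / k) by linarith)] at hd
      linarith [hbx.1, hbx.2, hbe.1, hbe.2]
  have hCRpp : CR a ℓ k e'' x'' \ bCR a ℓ k e x = CR a ℓ k e x \ bCR a ℓ k e x := by
    ext i
    simp only [Finset.mem_sdiff, CR, bCR, Finset.mem_filter, Finset.mem_univ, true_and]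
    have hbx := habsA ((a i).1 < x.1) lam2 hlam2pos hlam2δ
    have hbe := habsB (e.2 < (a i).2) beta2 hbeta2pos hbeta2δ
    constructor
    · rintro ⟨h, hbne⟩
      refine ⟨?_, hbne⟩
      have hd := hδCR i hbne
      rw [hX2 i, hE2 i] at h
      rcases lt_or_gt_of_ne hbne with hlt | hgt
      · exfalso
        rw [abs_of_neg (show l1 (x - a i) - (l1 (e - a i) + ℓ / k) < 0 by linarith)] at hd
        linarith [hbx.1, hbx.2, hbe.1, hbe.2]
      · linarith
    · rintro ⟨h, hbne⟩
      refine ⟨?_, hbne⟩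
      have hd := hδCR i hbne
      rw [hX2 i, hE2 i]
      have hgt : l1 (e - a i) + ℓ / k < l1 (x - a i) := lt_of_le_of_ne h (Ne.symm hbne)
      rw [abs_of_pos (show (0:ℝ) < l1 (x - a i) - (l1 (e - a i) + ℓ / k) by linarith)] at hd
      linarith [hbx.1, hbx.2, hbe.1, hbe.2]
  -- nonnegativity of the boundary weight
  have hDM2 : 0 ≤ wDM2 a ω ℓ k e x := Finset.sum_nonneg fun i _ => (hω i).le
  -- auxiliary: 1 - cos u
  have h1cos : 1 - Real.cos u = 2 * Real.sin (u / 2) ^ 2 := by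
    have h := Real.sin_sq_add_cos_sq (u / 2)
    have h2 : Real.cos u = Real.cos (u / 2 + u / 2) := by ring_nf
    rw [Real.cos_add] at h2
    linear_combination -h2 - h
  -- angle inequality in the appropriate direction
  have hang : (G ≤ 0 ∧ lam1 * WA + beta1 * WB ≤ 0) ∨
      (0 < G ∧ 0 ≤ lam2 * WA + beta2 * WB) := by
    by_cases hG : G ≤ 0
    · left
      refine ⟨hG, ?_⟩
      have hcu : Real.cos u = Real.cos θ * Real.cos (θ - u)
          + Real.sin θ * Real.sin (θ - u) := by
        have h := Real.cos_sub θ (θ - u)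
        rw [show θ - (θ - u) = u by ring] at h
        linarith
      have hpy := Real.sin_sq_add_cos_sq θ
      have hkey : G * (Real.cos (θ - u) - Real.cos θ) + WB * (1 - Real.cos u)
          = Real.sin θ * ((Real.cos (θ - u) - Real.cos θ) * WA
            + (Real.sin θ - Real.sin (θ - u)) * WB) := by
        rw [hGdef]
        linear_combination (-WB) * hcu - WB * hpy
      have hmain : G * Real.sin (θ - u / 2) + WB * Real.sin (u / 2) ≤ 0 := by
        by_cases hWB : WB ≤ 0
        · have t1 := mul_le_mul_of_nonneg_right hG hsθa.le
          have t2 := mul_le_mul_of_nonneg_right hWB hsinu2.le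
          linarith
        · push_neg at hWB
          have hGlt : G < 0 := lt_of_le_of_ne hG (hGne hWB)
          have hεeq : ε0 = |G| * Real.sin (θ / 2) / WB := by rw [hε0def, if_pos hWB]
          have hu' : u ≤ -G * Real.sin (θ / 2) / WB := by
            rw [hεeq, abs_of_neg hGlt] at huε; exact huε
          have t2 : u * WB ≤ -G * Real.sin (θ / 2) := by
            have h3 := mul_le_mul_of_nonneg_right hu' hWB.le
            rwa [div_mul_cancel₀ _ hWB.ne'] at h3
          have t1 : WB * Real.sin (u / 2) ≤ WB * (u / 2) :=
            mul_le_mul_of_nonneg_left hsinu2' hWB.le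
          have t3 : -G * Real.sin (θ / 2) ≤ -G * Real.sin (θ - u / 2) :=
            mul_le_mul_of_nonneg_left hsma (by linarith)
          have t4 : 0 ≤ -G * Real.sin (θ / 2) := mul_nonneg (by linarith) hsθ2.le
          linarith
      have hfin : G * (Real.cos (θ - u) - Real.cos θ) + WB * (1 - Real.cos u) ≤ 0 := by
        rw [hc1, h1cos]
        have hp : (0:ℝ) ≤ 2 * Real.sin (u / 2) := by linarith
        have hq := mul_le_mul_of_nonneg_right hmain hp
        linarith [hq]
      have h5 : Real.sin θ * ((Real.cos (θ - u) - Real.cos θ) * WA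
          + (Real.sin θ - Real.sin (θ - u)) * WB) ≤ 0 := by rw [← hkey]; exact hfin
      have h6 : (Real.cos (θ - u) - Real.cos θ) * WA
          + (Real.sin θ - Real.sin (θ - u)) * WB ≤ 0 := by
        by_contra hcon
        push_neg at hcon
        linarith [h5, mul_pos hsinθ hcon]
      have h7 := mul_le_mul_of_nonneg_left h6 hℓ.le
      rw [hlam1def, hbeta1def]
      linarith [h7]
    · right
      push_neg at hG
      refine ⟨hG, ?_⟩
      have hcu : Real.cos u = Real.cos (θ + u) * Real.cos θ
          + Real.sin (θ + u) * Real.sin θ := by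
        have h := Real.cos_sub (θ + u) θ
        rw [show θ + u - θ = u by ring] at h
        linarith
      have hpy := Real.sin_sq_add_cos_sq θ
      have hkey : G * (Real.cos θ - Real.cos (θ + u)) - WB * (1 - Real.cos u)
          = Real.sin θ * ((Real.cos θ - Real.cos (θ + u)) * WA
            + (Real.sin (θ + u) - Real.sin θ) * WB) := by
        rw [hGdef]
        linear_combination WB * hcu + WB * hpy
      have hmain : 0 ≤ G * Real.sin (θ + u / 2) - WB * Real.sin (u / 2) := by
        by_cases hWB : WB ≤ 0
        · have t1 := mul_le_mul_of_nonneg_right hG.le hsθb.le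
          have t2 := mul_le_mul_of_nonneg_right hWB hsinu2.le
          linarith
        · push_neg at hWB
          have hεeq : ε0 = |G| * Real.sin (θ / 2) / WB := by rw [hε0def, if_pos hWB]
          have hu' : u ≤ G * Real.sin (θ / 2) / WB := by
            rw [hεeq, abs_of_pos hG] at huε; exact huε
          have t2 : u * WB ≤ G * Real.sin (θ / 2) := by
            have h3 := mul_le_mul_of_nonneg_right hu' hWB.le
            rwa [div_mul_cancel₀ _ hWB.ne'] at h3
          have t1 : WB * Real.sin (u / 2) ≤ WB * (u / 2) :=
            mul_le_mul_of_nonneg_left hsinu2' hWB.le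
          have t3 : G * Real.sin (θ / 2) ≤ G * Real.sin (θ + u / 2) :=
            mul_le_mul_of_nonneg_left hsmb hG.le
          have t4 : 0 ≤ G * Real.sin (θ / 2) := mul_nonneg hG.le hsθ2.le
          linarith
      have hfin : 0 ≤ G * (Real.cos θ - Real.cos (θ + u)) - WB * (1 - Real.cos u) := by
        rw [hc2, h1cos]
        have hp : (0:ℝ) ≤ 2 * Real.sin (u / 2) := by linarith
        have hq := mul_le_mul_of_nonneg_right hmain hp
        linarith [hq]
      have h5 : 0 ≤ Real.sin θ * ((Real.cos θ - Real.cos (θ + u)) * WA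
          + (Real.sin (θ + u) - Real.sin θ) * WB) := by rw [← hkey]; exact hfin
      have h6 : 0 ≤ (Real.cos θ - Real.cos (θ + u)) * WA
          + (Real.sin (θ + u) - Real.sin θ) * WB := by
        by_contra hcon
        push_neg at hcon
        have h9 := mul_pos hsinθ (neg_pos.mpr hcon)
        linarith [h5, h9]
      have h7 := mul_le_mul_of_nonneg_left h6 hℓ.le
      rw [hlam2def, hbeta2def]
      linarith [h7]
  -- pointwise bound and objective bound, first direction
  have hmin1 : ∀ i, min (l1 (x' - a i)) (l1 (e' - a i) + ℓ / k)
      ≤ min (l1 (x - a i)) (l1 (e - a i) + ℓ / k) + (if l1 (e - a i) + ℓ / k ≤ l1 (x - a i) then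
          (if l1 (x - a i) = l1 (e - a i) + ℓ / k then
            (if (a i).1 < x.1 then -lam1 else if e.2 < (a i).2 then beta1 else -beta1)
           else (if e.2 < (a i).2 then beta1 else -beta1))
         else (if (a i).1 < x.1 then -lam1 else lam1)) := fun i =>
    minb1 lam1 beta1 (l1 (x - a i)) (l1 (e - a i) + ℓ / k) (l1 (x' - a i))
      (l1 (e' - a i) + ℓ / k) (a i).1 x.1 (a i).2 e.2 (hX1 i) (by rw [hE1 i]; ring)
  have hf1 : fObj a ω ℓ k e' x' ≤ fObj a ω ℓ k e x + ∑ i, ω i * (if l1 (e - a i) + ℓ / k ≤ l1 (x - a i) then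
          (if l1 (x - a i) = l1 (e - a i) + ℓ / k then
            (if (a i).1 < x.1 then -lam1 else if e.2 < (a i).2 then beta1 else -beta1)
           else (if e.2 < (a i).2 then beta1 else -beta1))
         else (if (a i).1 < x.1 then -lam1 else lam1)) :=
    fObj_le_of_min_le a ω ℓ k (fun i => (hω i).le) e x e' x' _ hmin1
  have hkey1 : (∑ i, ω i * (if l1 (e - a i) + ℓ / k ≤ l1 (x - a i) then
          (if l1 (x - a i) = l1 (e - a i) + ℓ / k then
            (if (a i).1 < x.1 then -lam1 else if e.2 < (a i).2 then beta1 else -beta1)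
           else (if e.2 < (a i).2 then beta1 else -beta1))
         else (if (a i).1 < x.1 then -lam1 else lam1)))
      = lam1 * WA + beta1 * WB - beta1 * wDM2 a ω ℓ k e x := by
    rw [Finset.sum_congr rfl (fun i _ => perindex1 lam1 beta1 (l1 (x - a i))
      (l1 (e - a i) + ℓ / k) (a i).1 (a i).2 x.1 x.2 e.2 (ω i) (hQ3f i) (hne i).2)]
    simp only [Finset.sum_sub_distrib, Finset.sum_add_distrib, ← Finset.mul_sum]
    rw [← w1_eq a ω ℓ k e x, ← w2_eq a ω ℓ k e x, ← w3_eq a ω ℓ k e x,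
      ← w4_eq a ω ℓ k e x, ← wP2_eq a ω ℓ k e x, ← wM2_eq a ω ℓ k e x,
      ← wDP2_eq a ω ℓ k e x, ← wDM2_eq a ω ℓ k e x, hWAdef, hWBdef]
    simp only [wA2, wB2]
    ring
  -- pointwise bound and objective bound, second direction
  have hmin2 : ∀ i, min (l1 (x'' - a i)) (l1 (e'' - a i) + ℓ / k)
      ≤ min (l1 (x - a i)) (l1 (e - a i) + ℓ / k) + (if l1 (e - a i) + ℓ / k ≤ l1 (x - a i) then
          (if l1 (x - a i) = l1 (e - a i) + ℓ / k then
            (if (a i).1 < x.1 then lam2 else if e.2 < (a i).2 then -beta2 else -lam2)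
           else (if e.2 < (a i).2 then -beta2 else beta2))
         else (if (a i).1 < x.1 then lam2 else -lam2)) := fun i =>
    minb2 lam2 beta2 (l1 (x - a i)) (l1 (e - a i) + ℓ / k) (l1 (x'' - a i))
      (l1 (e'' - a i) + ℓ / k) (a i).1 x.1 (a i).2 e.2 (hX2 i) (by rw [hE2 i]; ring)
  have hf2 : fObj a ω ℓ k e'' x'' ≤ fObj a ω ℓ k e x + ∑ i, ω i * (if l1 (e - a i) + ℓ / k ≤ l1 (x - a i) then
          (if l1 (x - a i) = l1 (e - a i) + ℓ / k then
            (if (a i).1 < x.1 then lam2 else if e.2 < (a i).2 then -beta2 else -lam2)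
           else (if e.2 < (a i).2 then -beta2 else beta2))
         else (if (a i).1 < x.1 then lam2 else -lam2)) :=
    fObj_le_of_min_le a ω ℓ k (fun i => (hω i).le) e x e'' x'' _ hmin2
  have hkey2 : (∑ i, ω i * (if l1 (e - a i) + ℓ / k ≤ l1 (x - a i) then
          (if l1 (x - a i) = l1 (e - a i) + ℓ / k then
            (if (a i).1 < x.1 then lam2 else if e.2 < (a i).2 then -beta2 else -lam2)
           else (if e.2 < (a i).2 then -beta2 else beta2))
         else (if (a i).1 < x.1 then lam2 else -lam2)))
      = -(lam2 * WA) - beta2 * WB - lam2 * wDM2 a ω ℓ k e x := by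
    rw [Finset.sum_congr rfl (fun i _ => perindex2 lam2 beta2 (l1 (x - a i))
      (l1 (e - a i) + ℓ / k) (a i).1 (a i).2 x.1 x.2 e.2 (ω i) (hQ3f i) (hne i).2)]
    simp only [Finset.sum_sub_distrib, Finset.sum_add_distrib, Finset.sum_neg_distrib,
      ← Finset.mul_sum]
    rw [← w1_eq a ω ℓ k e x, ← w2_eq a ω ℓ k e x, ← w3_eq a ω ℓ k e x,
      ← w4_eq a ω ℓ k e x, ← wP2_eq a ω ℓ k e x, ← wM2_eq a ω ℓ k e x,
      ← wDP2_eq a ω ℓ k e x, ← wDM2_eq a ω ℓ k e x, hWAdef, hWBdef]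
    simp only [wA2, wB2]
    ring
  -- the final disjunction
  have hfinal : fObj a ω ℓ k e' x' ≤ fObj a ω ℓ k e x ∨
      fObj a ω ℓ k e'' x'' ≤ fObj a ω ℓ k e x := by
    rcases hang with ⟨hG, hangle⟩ | ⟨hG, hangle⟩
    · left
      rw [hkey1] at hf1
      have h8 : 0 ≤ beta1 * wDM2 a ω ℓ k e x := mul_nonneg hbeta1pos.le hDM2
      linarith [hf1]
    · right
      rw [hkey2] at hf2
      have h8 : 0 ≤ lam2 * wDM2 a ω ℓ k e x := mul_nonneg hlam2pos.le hDM2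
      linarith [hf2]
  -- assemble
  refine ⟨θ - u, θ + u, lam1, beta1, lam2, beta2, x', e', x'', e'',
    by linarith, by linarith, by linarith, by linarith,
    hlam1def, hbeta1def, hlam2def, hbeta2def,
    hx'def, he'def, hx''def, he''def,
    hCRp, hCRpp, hQ1p, hQ1pp, hQ2p, hQ2pp, hQ3p, hQ3pp, hQ4p, hQ4pp, ?_, hfinal⟩
  intro i
  have hm := hδe2 i
  constructor
  · intro h
    have habs : |e.2 - (a i).2| = e.2 - (a i).2 := abs_of_pos (by linarith)
    rw [habs] at hm
    linarith
  · intro h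
    have habs : |e.2 - (a i).2| = -(e.2 - (a i).2) := abs_of_neg (by linarith)
    rw [habs] at hm
    linarith
end

section
/- Let w_a < 0 < w_b and ℓ > 0. (1) If 0<θ'<θ≤π/2 and w_b/(−w_a) ≤ tan((θ+θ')/2), then w_a·ℓ(cos θ'−cos θ) + w_b·ℓ(sin θ−sin θ') ≤ 0. (2) If 0<θ<θ''≤π/2 and w_b/(−w_a) ≥ tan((θ+θ'')/2), then −w_a·ℓ(cos θ−cos θ'') − w_b·ℓ(sin θ''−sin θ) ≤ 0. -/
open Real

/-- The key sign computation in Theorem 2.3, case ω^a < 0 < ω^b: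
(1) if w_b/(−w_a) ≤ tan((θ+θ')/2) then w_a·λ₁ + w_b·β₁ ≤ 0;
(2) if w_b/(−w_a) ≥ tan((θ+θ'')/2) then −w_a·λ₂ − w_b·β₂ ≤ 0. -/
theorem sign_of_perturbation (wa wb ℓ : ℝ) (hwa : wa < 0) (hwb : 0 < wb) (hℓ : 0 < ℓ) :
    (∀ θ θ' : ℝ, 0 < θ' → θ' < θ → θ ≤ π / 2 →
      wb / (-wa) ≤ tan ((θ + θ') / 2) →
      wa * (ℓ * (cos θ' - cos θ)) + wb * (ℓ * (sin θ - sin θ')) ≤ 0) ∧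
    (∀ θ θ'' : ℝ, 0 < θ → θ < θ'' → θ'' ≤ π / 2 →
      tan ((θ + θ'') / 2) ≤ wb / (-wa) →
      -(wa * (ℓ * (cos θ - cos θ''))) - wb * (ℓ * (sin θ'' - sin θ)) ≤ 0) := by
  have hpi := Real.pi_pos
  constructor
  · intro θ θ' h1 h2 h3 htan
    have hcos : 0 < Real.cos ((θ + θ') / 2) :=
      Real.cos_pos_of_mem_Ioo ⟨by linarith, by linarith⟩
    have hsin : 0 < Real.sin ((θ + θ') / 2) :=
      Real.sin_pos_of_pos_of_lt_pi (by linarith) (by linarith)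
    have hs : 0 < Real.sin ((θ - θ') / 2) :=
      Real.sin_pos_of_pos_of_lt_pi (by linarith) (by linarith)
    rw [Real.tan_eq_sin_div_cos] at htan
    have hmul : wb * Real.cos ((θ + θ') / 2) ≤ Real.sin ((θ + θ') / 2) * (-wa) :=
      (div_le_div_iff₀ (by linarith) hcos).mp htan
    have e1 : Real.cos θ' - Real.cos θ
        = 2 * Real.sin ((θ + θ') / 2) * Real.sin ((θ - θ') / 2) := by
      rw [Real.cos_sub_cos, show (θ' - θ) / 2 = -((θ - θ') / 2) by ring, Real.sin_neg,
        show (θ' + θ) / 2 = (θ + θ') / 2 by ring]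
      ring
    have e2 : Real.sin θ - Real.sin θ'
        = 2 * Real.sin ((θ - θ') / 2) * Real.cos ((θ + θ') / 2) := Real.sin_sub_sin θ θ'
    rw [e1, e2]
    nlinarith [mul_pos hℓ hs, mul_nonneg (mul_pos hℓ hs).le
      (sub_nonneg.mpr hmul)]
  · intro θ θ'' h1 h2 h3 htan
    have hcos : 0 < Real.cos ((θ + θ'') / 2) :=
      Real.cos_pos_of_mem_Ioo ⟨by linarith, by linarith⟩
    have hsin : 0 < Real.sin ((θ + θ'') / 2) :=
      Real.sin_pos_of_pos_of_lt_pi (by linarith) (by linarith)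
    have hs : 0 < Real.sin ((θ'' - θ) / 2) :=
      Real.sin_pos_of_pos_of_lt_pi (by linarith) (by linarith)
    rw [Real.tan_eq_sin_div_cos] at htan
    have hmul : Real.sin ((θ + θ'') / 2) * (-wa) ≤ wb * Real.cos ((θ + θ'') / 2) :=
      (div_le_div_iff₀ hcos (by linarith)).mp htan
    have e1 : Real.cos θ - Real.cos θ''
        = 2 * Real.sin ((θ + θ'') / 2) * Real.sin ((θ'' - θ) / 2) := by
      rw [Real.cos_sub_cos, show (θ - θ'') / 2 = -((θ'' - θ) / 2) by ring, Real.sin_neg]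
      ring
    have e2 : Real.sin θ'' - Real.sin θ
        = 2 * Real.sin ((θ'' - θ) / 2) * Real.cos ((θ + θ'') / 2) := by
      rw [Real.sin_sub_sin, show (θ + θ'') / 2 = (θ'' + θ) / 2 by ring]
    rw [e1, e2]
    nlinarith [mul_pos hℓ hs, mul_nonneg (mul_pos hℓ hs).le
      (sub_nonneg.mpr hmul)]
end
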